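/- Let N = H(n) be the Heisenberg group and consider the Carnot group N × R with componentwise operation and dilations δ_ε(p,t) = (δ_ε^N(p), εt). Every Lie algebra automorphism of N × R that commutes with the dilations has the block form (p,t) ↦ (A(p), c(p) + dt), where A is a dilation-commuting Lie algebra automorphism of N, c is a linear functional vanishing on [N,N], and d ∈ R, d ≠ 0; in particular the N-component of the image does not depend on t. -/
import Mathlib


/-- `R^{2n}` presented as pairs of vectors in `R^n`. -/
abbrev V (n : ℕ) := (Fin n → ℝ) × (Fin n → ℝ)

/-- The standard symplectic form on `R^{2n}`. -/
def omega {n : ℕ} (x y : V n) : ℝ := ∑ i, (x.1 i * y.2 i - x.2 i * y.1 i)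

/-- The Heisenberg group `H(n) = R^{2n} × R` as a set. -/
abbrev H (n : ℕ) := V n × ℝ

/-- The Heisenberg group operation. -/
noncomputable def hmul {n : ℕ} (p q : H n) : H n :=
  (p.1 + q.1, p.2 + q.2 + (1 / 2) * omega p.1 q.1)

/-- The inverse `(x,x̄)⁻¹ = (-x,-x̄)`. -/
def hinv {n : ℕ} (p : H n) : H n := (-p.1, -p.2)

/-- The dilations `δ_ε(x,x̄) = (εx, ε²x̄)`. -/
def dil {n : ℕ} (ε : ℝ) (p : H n) : H n := (ε • p.1, ε ^ 2 * p.2)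

/-- The Lie bracket of the Heisenberg algebra. -/
noncomputable def hbracket {n : ℕ} (p q : H n) : H n := ((0 : V n), omega p.1 q.1)

/-- The Lie bracket on `H(n) × ℝ`. -/
noncomputable def brExt {n : ℕ} (u v : H n × ℝ) : H n × ℝ := (hbracket u.1 v.1, 0)

/-- The dilations on `H(n) × ℝ`. -/
def dilExt {n : ℕ} (ε : ℝ) (u : H n × ℝ) : H n × ℝ := (dil ε u.1, ε * u.2)

lemma omega_zero_right {n : ℕ} (x : V n) : omega x 0 = 0 := by simp [omega]

lemma omega_nondeg {n : ℕ} (x : V n) (h : ∀ y : V n, omega y x = 0) : x = 0 := by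
  ext i
  · have := h ((0 : Fin n → ℝ), Pi.single i 1)
    simpa [omega, Pi.single_apply, eq_comm] using this
  · have := h ((Pi.single i 1 : Fin n → ℝ), 0)
    simpa [omega, Pi.single_apply] using this

theorem linear_maps_of_extended_group (n : ℕ) (hn : 1 ≤ n)
    (T : (H n × ℝ) →ₗ[ℝ] (H n × ℝ))
    (hbij : Function.Bijective T)
    (hbr : ∀ u v : H n × ℝ, T (brExt u v) = brExt (T u) (T v))
    (hdil : ∀ ε : ℝ, 0 < ε → ∀ u, T (dilExt ε u) = dilExt ε (T u)) :
    ∃ (A : H n →ₗ[ℝ] H n) (c : H n →ₗ[ℝ] ℝ) (d : ℝ),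
      d ≠ 0 ∧ Function.Bijective A ∧
      (∀ p q : H n, A (hbracket p q) = hbracket (A p) (A q)) ∧
      (∀ ε : ℝ, 0 < ε → ∀ p, A (dil ε p) = dil ε (A p)) ∧
      (∀ z : ℝ, c ((0 : V n), z) = 0) ∧
      (∀ (p : H n) (t : ℝ), T (p, t) = (A p, c p + d * t)) := by
  classical
  set A : H n →ₗ[ℝ] H n :=
    (LinearMap.fst ℝ (H n) ℝ) ∘ₗ T ∘ₗ (LinearMap.inl ℝ (H n) ℝ) with hAdef
  set c : H n →ₗ[ℝ] ℝ :=
    (LinearMap.snd ℝ (H n) ℝ) ∘ₗ T ∘ₗ (LinearMap.inl ℝ (H n) ℝ) with hcdef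
  set d : ℝ := (T ((0 : H n), 1)).2 with hddef
  have hApq : ∀ p : H n, T (p, (0:ℝ)) = (A p, c p) := by
    intro p; simp [hAdef, hcdef]
  -- the H-component of T(0,1)
  set b : H n := (T ((0 : H n), 1)).1 with hbdef
  -- b.2 = 0 from dilation
  have hb2 : b.2 = 0 := by
    have h2 := hdil 2 (by norm_num) ((0 : H n), 1)
    have hL : dilExt (2:ℝ) ((0 : H n), (1:ℝ)) = (2:ℝ) • ((0 : H n), (1:ℝ)) := by
      simp [dilExt, dil, Prod.ext_iff]
    rw [hL, map_smul] at h2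
    have h2' := congrArg (fun w : H n × ℝ => w.1.2) h2
    simp only [dilExt, dil, Prod.smul_fst, Prod.smul_snd, smul_eq_mul] at h2'
    have : (2:ℝ) * b.2 = 2 ^ 2 * b.2 := h2'
    nlinarith [this]
  -- b.1 = 0 from brackets and surjectivity
  have hb1 : b.1 = 0 := by
    apply omega_nondeg
    intro y
    obtain ⟨u, hu⟩ := hbij.2 ((y, 0), 0)
    have h := hbr u ((0 : H n), 1)
    have hL : brExt u ((0 : H n), (1:ℝ)) = 0 := by
      simp [brExt, hbracket, omega_zero_right, Prod.ext_iff]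
    rw [hL, map_zero] at h
    have h' := congrArg (fun w : H n × ℝ => w.1.2) h.symm
    simpa [brExt, hbracket, hu, ← hbdef] using h'
  have hT01 : T ((0 : H n), 1) = ((0 : H n), d) := by
    have hb : b = 0 := Prod.ext hb1 hb2
    exact Prod.ext hb rfl
  have hT0t : ∀ t : ℝ, T ((0 : H n), t) = ((0 : H n), d * t) := by
    intro t
    have : ((0 : H n), t) = t • ((0 : H n), (1:ℝ)) := by
      simp [Prod.ext_iff]
    rw [this, map_smul, hT01]
    simp [Prod.ext_iff, mul_comm]
  have hTpt : ∀ (p : H n) (t : ℝ), T (p, t) = (A p, c p + d * t) := by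
    intro p t
    have : ((p, t) : H n × ℝ) = (p, 0) + ((0 : H n), t) := by simp
    rw [this, map_add, hApq, hT0t]
    simp [Prod.ext_iff]
  have hd0 : d ≠ 0 := by
    intro h
    have : T ((0 : H n), 1) = T 0 := by rw [hT01, h, map_zero]; simp
    have := hbij.1 this
    have := congrArg Prod.snd this
    simp at this
  refine ⟨A, c, d, hd0, ?_, ?_, ?_, ?_, hTpt⟩
  · constructor
    · intro p q hAeq
      have h1 : T (p, -(c p)/d) = T (q, -(c q)/d) := by
        rw [hTpt, hTpt, hAeq]
        have : c p + d * (-(c p)/d) = c q + d * (-(c q)/d) := by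
          field_simp
          ring
        rw [this]
      exact congrArg Prod.fst (hbij.1 h1)
    · intro q
      obtain ⟨u, hu⟩ := hbij.2 (q, 0)
      refine ⟨u.1, ?_⟩
      have : T (u.1, u.2) = (q, 0) := by simpa using hu
      rw [hTpt] at this
      exact congrArg Prod.fst this
  · intro p q
    have h := hbr (p, (0:ℝ)) (q, (0:ℝ))
    have hL : brExt ((p, (0:ℝ)) : H n × ℝ) (q, (0:ℝ)) = (hbracket p q, 0) := rfl
    rw [hL, hTpt, hApq, hApq] at h
    have := congrArg Prod.fst h
    simpa [brExt] using this
  · intro ε hε p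
    have h := hdil ε hε (p, (0:ℝ))
    have hL : dilExt ε ((p, (0:ℝ)) : H n × ℝ) = (dil ε p, 0) := by
      simp [dilExt]
    rw [hL, hTpt, hApq] at h
    have := congrArg Prod.fst h
    simpa [dilExt] using this
  · intro z
    have h := hdil 2 (by norm_num) (((0 : V n), z), (0:ℝ))
    have hL : dilExt (2:ℝ) ((((0 : V n), z), (0:ℝ)) : H n × ℝ)
        = ((((0 : V n), 4*z), (0:ℝ)) : H n × ℝ) := by
      simp only [dilExt, dil, smul_zero, mul_zero]
      norm_num
    rw [hL, hApq, hApq] at h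
    have h' := congrArg Prod.snd h
    simp only [dilExt] at h'
    have e : (((0 : V n), 4*z) : H n) = (4:ℝ) • (((0 : V n), z) : H n) := by
      simp [Prod.ext_iff]
    rw [e, map_smul, smul_eq_mul] at h'
    linarith
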